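/- Let F : ℝ² → ℝ² satisfy F(x+m) = F(x)+m for all m ∈ ℤ², and let x₀ ∈ ℝ² be such that ρ(x₀, F) = v ≠ 0 and π(x₀) ∈ 𝕋² is recurrent under the induced map f. Then for every ε > 0 and δ > 0 there exist arbitrarily large n and v(n) ∈ ℤ² such that the sequence x₀, F(x₀), …, F^{n−1}(x₀), x₀ + v(n) is an ε-chain for F, ‖v(n)‖ → ∞, and ‖v(n)/‖v(n)‖ − v/‖v‖‖ < δ. -/

import Mathlib

open Filter Topology

def IsTorusLift (F : ℝ × ℝ → ℝ × ℝ) : Prop :=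
  ∀ (x : ℝ × ℝ) (m : ℤ × ℤ),
    F (x + ((m.1 : ℝ), (m.2 : ℝ))) = F x + ((m.1 : ℝ), (m.2 : ℝ))

theorem chains_along_recurrent_orbit (F : ℝ × ℝ → ℝ × ℝ)
    (hlift : IsTorusLift F) (x₀ v : ℝ × ℝ) (hv : v ≠ 0)
    (hρ : Tendsto (fun n : ℕ => (n : ℝ)⁻¹ • (F^[n] x₀ - x₀)) atTop (nhds v))
    -- recurrence of `π(x₀)` under the induced torus map, stated in the cover
    (hrec : ∀ ε > (0 : ℝ), ∀ N : ℕ, ∃ n ≥ N, ∃ m : ℤ × ℤ,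
      dist (F^[n] x₀) (x₀ + ((m.1 : ℝ), (m.2 : ℝ))) < ε) :
    ∀ ε > (0 : ℝ), ∀ δ > (0 : ℝ), ∀ N : ℕ, ∃ n ≥ N, ∃ vn : ℤ × ℤ,
      (∃ c : ℕ → ℝ × ℝ, (∀ j < n, c j = F^[j] x₀) ∧
          c n = x₀ + ((vn.1 : ℝ), (vn.2 : ℝ)) ∧
          ∀ j < n, dist (F (c j)) (c (j + 1)) < ε) ∧
      (N : ℝ) ≤ ‖((vn.1 : ℝ), (vn.2 : ℝ))‖ ∧
      ‖‖((vn.1 : ℝ), (vn.2 : ℝ))‖⁻¹ • ((vn.1 : ℝ), (vn.2 : ℝ)) - ‖v‖⁻¹ • v‖ < δ := by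
  intro ε hε δ hδ N
  have hvnorm : (0:ℝ) < ‖v‖ := norm_pos_iff.mpr hv
  have hcont : ContinuousAt (fun u : ℝ × ℝ => ‖u‖⁻¹ • u) v :=
    ((continuous_norm.continuousAt).inv₀ hvnorm.ne').smul continuousAt_id
  obtain ⟨η, hη, hηδ⟩ := Metric.continuousAt_iff.mp hcont δ hδ
  set η' := min η (‖v‖/2) with hη'def
  have hη'pos : 0 < η' := lt_min hη (by positivity)
  obtain ⟨N₁, hN₁⟩ := Metric.tendsto_atTop.mp hρ (η'/2) (by positivity)
  obtain ⟨N₂, hN₂⟩ := exists_nat_ge (max (2/η') (2*N/‖v‖))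
  obtain ⟨n, hn, m, hm⟩ := hrec (min ε 1) (lt_min hε one_pos) (max N (max N₁ (N₂+1)))
  have hnN : N ≤ n := le_trans (le_max_left _ _) hn
  have hnN₁ : N₁ ≤ n := le_trans (le_trans (le_max_left _ _) (le_max_right _ _)) hn
  have hnN₂ : N₂ + 1 ≤ n := le_trans (le_trans (le_max_right _ _) (le_max_right _ _)) hn
  have hnpos : 0 < n := lt_of_lt_of_le (Nat.succ_pos _) hnN₂
  have hnr : (0:ℝ) < n := Nat.cast_pos.mpr hnpos
  set w : ℝ × ℝ := ((m.1 : ℝ), (m.2 : ℝ)) with hw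
  have hN₂n : (N₂ : ℝ) < n := by exact_mod_cast Nat.lt_of_succ_le hnN₂
  have hn1 : 2/η' < n := lt_of_le_of_lt (le_max_left _ _) (lt_of_le_of_lt hN₂ hN₂n)
  have hn2 : 2*N/‖v‖ < n := lt_of_le_of_lt (le_max_right _ _) (lt_of_le_of_lt hN₂ hN₂n)
  have hinvn : (n:ℝ)⁻¹ < η'/2 := by
    rw [← one_div, div_lt_div_iff₀ hnr two_pos]
    have := (div_lt_iff₀ hη'pos).mp hn1
    linarith
  -- the key estimate : ‖(n:ℝ)⁻¹ • w - v‖ < η'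
  have hclose : ‖(n:ℝ)⁻¹ • w - v‖ < η' := by
    have h1 : ‖(n:ℝ)⁻¹ • (F^[n] x₀ - x₀) - v‖ < η'/2 := by
      have := hN₁ n hnN₁
      rwa [dist_eq_norm] at this
    have h2 : ‖F^[n] x₀ - (x₀ + w)‖ < 1 := by
      rw [← dist_eq_norm]
      exact lt_of_lt_of_le hm (min_le_right _ _)
    have key : (n:ℝ)⁻¹ • w - v
        = ((n:ℝ)⁻¹ • (F^[n] x₀ - x₀) - v) - (n:ℝ)⁻¹ • (F^[n] x₀ - (x₀ + w)) := by
      module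
    rw [key]
    have h3 : ‖(n:ℝ)⁻¹ • (F^[n] x₀ - (x₀ + w))‖ < η'/2 := by
      rw [norm_smul, Real.norm_eq_abs, abs_of_pos (inv_pos.mpr hnr)]
      calc (n:ℝ)⁻¹ * ‖F^[n] x₀ - (x₀ + w)‖ < (n:ℝ)⁻¹ * 1 := by
            apply mul_lt_mul_of_pos_left h2 (inv_pos.mpr hnr)
        _ = (n:ℝ)⁻¹ := mul_one _
        _ < η'/2 := hinvn
    calc ‖((n:ℝ)⁻¹ • (F^[n] x₀ - x₀) - v) - (n:ℝ)⁻¹ • (F^[n] x₀ - (x₀ + w))‖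
        ≤ ‖(n:ℝ)⁻¹ • (F^[n] x₀ - x₀) - v‖ + ‖(n:ℝ)⁻¹ • (F^[n] x₀ - (x₀ + w))‖ :=
          norm_sub_le _ _
      _ < η'/2 + η'/2 := add_lt_add h1 h3
      _ = η' := by ring
  -- norm lower bounds
  have hη'v : η' ≤ ‖v‖/2 := min_le_right _ _
  have hsmallnorm : ‖v‖/2 ≤ ‖(n:ℝ)⁻¹ • w‖ := by
    have habs := abs_le.mp (le_trans (abs_norm_sub_norm_le ((n:ℝ)⁻¹ • w) v) hclose.le)
    linarith [habs.1]
  have hnormsmul : ‖(n:ℝ)⁻¹ • w‖ = (n:ℝ)⁻¹ * ‖w‖ := by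
    rw [norm_smul, Real.norm_eq_abs, abs_of_pos (inv_pos.mpr hnr)]
  have hwnorm : (n:ℝ) * (‖v‖/2) ≤ ‖w‖ := by
    rw [hnormsmul] at hsmallnorm
    have := mul_le_mul_of_nonneg_left hsmallnorm (le_of_lt hnr)
    rwa [← mul_assoc, mul_inv_cancel₀ (ne_of_gt hnr), one_mul] at this
  have hwpos : (0:ℝ) < ‖w‖ := lt_of_lt_of_le (by positivity) hwnorm
  have hNw : (N : ℝ) ≤ ‖w‖ := by
    have h2N : 2*N ≤ (n:ℝ) * ‖v‖ := by
      have := (div_lt_iff₀ hvnorm).mp hn2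
      linarith
    calc (N:ℝ) = (2*N)/2 := by ring
      _ ≤ ((n:ℝ) * ‖v‖)/2 := by linarith
      _ = (n:ℝ) * (‖v‖/2) := by ring
      _ ≤ ‖w‖ := hwnorm
  -- direction estimate
  have hdir : ‖‖w‖⁻¹ • w - ‖v‖⁻¹ • v‖ < δ := by
    have hη'η : η' ≤ η := min_le_left _ _
    have := hηδ (x := (n:ℝ)⁻¹ • w) (by rw [dist_eq_norm]; exact lt_of_lt_of_le hclose hη'η)
    rw [dist_eq_norm] at this
    have heq : ‖(n:ℝ)⁻¹ • w‖⁻¹ • ((n:ℝ)⁻¹ • w) = ‖w‖⁻¹ • w := by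
      rw [hnormsmul, smul_smul]
      congr 1
      field_simp
    rwa [heq] at this
  -- build the chain
  refine ⟨n, hnN, m, ⟨fun j => if j < n then F^[j] x₀ else x₀ + w, ?_, ?_, ?_⟩, hNw, hdir⟩
  · intro j hj; simp [hj]
  · simp [hw]
  · intro j hj
    simp only [if_pos hj]
    rw [← Function.iterate_succ_apply' F j x₀]
    by_cases h : j + 1 < n
    · simp only [if_pos h, dist_self]
      exact hε
    · have hjn : j + 1 = n := le_antisymm (Nat.succ_le_of_lt hj) (not_lt.mp h)
      rw [if_neg h, (show j.succ = n from hjn)]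
      exact lt_of_lt_of_le hm (min_le_left _ _)
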